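/- (Dynamics of the deep state.) Let n, z, h_x, h_u ∈ ℕ with n ≥ 1, and let α : {1,…,n} → {1,…,z} → ℝ satisfy the orthonormality condition (1/n)·Σ_{i=1}^n α^{i,j}·α^{i,k} = 1 if j = k and 0 if j ≠ k. Let A be an h_x × h_x real matrix, B an h_x × h_u real matrix, and for each j ∈ {1,…,z} let Ā^j be an h_x × (z·h_x) real matrix and B̄^j an h_x × (z·h_u) real matrix. Define the (z·h_x) × (z·h_x) matrix 𝐀̄ = diag(A,…,A) + row(Ā^1,…,Ā^z) and the (z·h_x) × (z·h_u) matrix 𝐁̄ = diag(B,…,B) + row(B̄^1,…,B̄^z). Given vectors x^i, w^i ∈ ℝ^{h_x} and u^i ∈ ℝ^{h_u}, define the stacked weighted averages 𝐱̄, 𝐮̄, 𝐰̄, and suppose the next states are x'^i = A x^i + B u^i + Σ_{j=1}^z α^{i,j}·(Ā^j 𝐱̄ + B̄^j 𝐮̄) + w^i. Then the next deep state satisfies 𝐱̄' = 𝐀̄ 𝐱̄ + 𝐁̄ 𝐮̄ + 𝐰̄, where 𝐱̄' is the stacked vector of weighted averages (x̄'^1;…;x̄'^z) of the next states. -/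

import Mathlib

/-!
Averaging against `α` is linear, so it commutes with `A`, `B` and with sums, and orthonormality
of `α` makes the `j`-th average of `i ↦ Σₖ αⁱᵏ cᵏ` equal to `cʲ`. Hence block `j` of `𝐱̄'` is
`A x̄ʲ + B ūʲ + Āʲ 𝐱̄ + B̄ʲ 𝐮̄ + w̄ʲ`, which is block `j` of `𝐀̄ 𝐱̄ + 𝐁̄ 𝐮̄ + 𝐰̄`.
-/

open Matrix Finset

/-- The `j`-th weighted average `v̄ʲ = (1/n) Σ_i αⁱʲ vⁱ`. -/
noncomputable def wavg {n z h : ℕ} (α : Fin n → Fin z → ℝ)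
    (v : Fin n → Fin h → ℝ) (j : Fin z) : Fin h → ℝ :=
  (1 / n : ℝ) • ∑ i, α i j • v i

/-- The stacked vector (deep state) `𝐯̄ = (v̄¹;…;v̄ᶻ) ∈ ℝ^{z·h}`. -/
noncomputable def stacked {n z h : ℕ} (α : Fin n → Fin z → ℝ)
    (v : Fin n → Fin h → ℝ) : Fin z × Fin h → ℝ :=
  fun p => wavg α v p.1 p.2

/-- `diag(M,…,M) + row(M¹,…,Mᶻ)`: the z-fold block-diagonal matrix built from `M`
plus the matrix whose block-row `j` is `Mʲ`. -/
def diagPlusRow {z h h' : ℕ} (M : Matrix (Fin h) (Fin h') ℝ)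
    (Mbar : Fin z → Matrix (Fin h) (Fin z × Fin h') ℝ) :
    Matrix (Fin z × Fin h) (Fin z × Fin h') ℝ :=
  Matrix.of fun p q => (if p.1 = q.1 then M p.2 q.2 else 0) + Mbar p.1 p.2 q

section WeightedAverage

variable {n z h : ℕ} (α : Fin n → Fin z → ℝ)

lemma wavg_add (v w : Fin n → Fin h → ℝ) (j : Fin z) :
    wavg α (v + w) j = wavg α v j + wavg α w j := by
  simp only [wavg, Pi.add_apply, smul_add, sum_add_distrib]

lemma wavg_mulVec {h' : ℕ} (M : Matrix (Fin h') (Fin h) ℝ) (v : Fin n → Fin h → ℝ)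
    (j : Fin z) : wavg α (fun i => M *ᵥ v i) j = M *ᵥ wavg α v j := by
  simp only [wavg, mulVec_smul, mulVec_sum]

lemma wavg_sum_smul_of_orthonormal
    (horth : ∀ j k : Fin z, (1 / n : ℝ) * ∑ i, α i j * α i k = if j = k then 1 else 0)
    (c : Fin z → Fin h → ℝ) (j : Fin z) :
    wavg α (fun i => ∑ k, α i k • c k) j = c j := by
  calc wavg α (fun i => ∑ k, α i k • c k) j
      = ∑ k, ((1 / n : ℝ) * ∑ i, α i j * α i k) • c k := by
        simp only [wavg, smul_sum, sum_smul, smul_smul, mul_sum]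
        rw [sum_comm]
    _ = c j := by simp only [horth, ite_smul, one_smul, zero_smul, sum_ite_eq, mem_univ, if_true]

end WeightedAverage

lemma diagPlusRow_mulVec_apply {z h h' : ℕ} (M : Matrix (Fin h) (Fin h') ℝ)
    (Mbar : Fin z → Matrix (Fin h) (Fin z × Fin h') ℝ) (v : Fin z × Fin h' → ℝ)
    (j : Fin z) (p : Fin h) :
    (diagPlusRow M Mbar *ᵥ v) (j, p) = (M *ᵥ fun q => v (j, q)) p + (Mbar j *ᵥ v) p := by
  simp [diagPlusRow, mulVec, dotProduct, Fintype.sum_prod_type, add_mul, sum_add_distrib,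
    ite_mul]

theorem deep_state_dynamics_general
    {n z hx hu : ℕ} (α : Fin n → Fin z → ℝ)
    (horth : ∀ j k : Fin z,
      (1 / n : ℝ) * ∑ i, α i j * α i k = if j = k then 1 else 0)
    (A : Matrix (Fin hx) (Fin hx) ℝ) (B : Matrix (Fin hx) (Fin hu) ℝ)
    (Abar : Fin z → Matrix (Fin hx) (Fin z × Fin hx) ℝ)
    (Bbar : Fin z → Matrix (Fin hx) (Fin z × Fin hu) ℝ)
    (x w x' : Fin n → Fin hx → ℝ) (u : Fin n → Fin hu → ℝ)
    (hdyn : ∀ i, x' i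
      = A.mulVec (x i) + B.mulVec (u i)
        + ∑ j, α i j • ((Abar j).mulVec (stacked α x) + (Bbar j).mulVec (stacked α u))
        + w i) :
    stacked α x'
      = (diagPlusRow A Abar).mulVec (stacked α x)
        + (diagPlusRow B Bbar).mulVec (stacked α u)
        + stacked α w := by
  have hx' : x' = (fun i => A *ᵥ x i) + (fun i => B *ᵥ u i)
      + (fun i => ∑ j, α i j • (Abar j *ᵥ stacked α x + Bbar j *ᵥ stacked α u)) + w :=
    funext hdyn
  funext ⟨j, p⟩
  have hj : wavg α x' j = A *ᵥ wavg α x j + B *ᵥ wavg α u j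
      + (Abar j *ᵥ stacked α x + Bbar j *ᵥ stacked α u) + wavg α w j := by
    rw [hx', wavg_add, wavg_add, wavg_add, wavg_mulVec, wavg_mulVec,
      wavg_sum_smul_of_orthonormal α horth]
  simp only [stacked, hj, Pi.add_apply, diagPlusRow_mulVec_apply]
  ring

theorem deep_state_dynamics
    {n z hx hu : ℕ} (hn : 1 ≤ n) (α : Fin n → Fin z → ℝ)
    (horth : ∀ j k : Fin z,
      (1 / n : ℝ) * ∑ i, α i j * α i k = if j = k then 1 else 0)
    (A : Matrix (Fin hx) (Fin hx) ℝ) (B : Matrix (Fin hx) (Fin hu) ℝ)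
    (Abar : Fin z → Matrix (Fin hx) (Fin z × Fin hx) ℝ)
    (Bbar : Fin z → Matrix (Fin hx) (Fin z × Fin hu) ℝ)
    (x w x' : Fin n → Fin hx → ℝ) (u : Fin n → Fin hu → ℝ)
    (hdyn : ∀ i, x' i
      = A.mulVec (x i) + B.mulVec (u i)
        + ∑ j, α i j • ((Abar j).mulVec (stacked α x) + (Bbar j).mulVec (stacked α u))
        + w i) :
    stacked α x'
      = (diagPlusRow A Abar).mulVec (stacked α x)
        + (diagPlusRow B Bbar).mulVec (stacked α u)
        + stacked α w :=
  deep_state_dynamics_general α horth A B Abar Bbar x w x' u hdyn
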